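/- Let (X, ε) and (Y, η) be locally compact paracompact Hausdorff spaces with proper coarsely connected coarse structures and let π : Y → X be a continuous coarse equivalence. Let X +_f Z and Y +_g Z' be perspective compactifications such that π extends to a continuous map π+ψ : Y +_g Z' → X +_f Z. Let f* be the pullback of f with respect to π and id_Z. Then the map id+ψ : Y +_g Z' → Y +_{f*} Z is continuous. Moreover, if ψ is a homeomorphism then id+ψ is a homeomorphism, and if Z = Z' and ψ = id_Z then f* = g. -/

import Mathlib

namespace Paper

open Set Topology

/-! ### Coarse structures -/

/-- The inverse of a relation `e ⊆ X × X`. -/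
def invRel {X : Type*} (e : Set (X × X)) : Set (X × X) := {p | (p.2, p.1) ∈ e}

/-- The composition of relations: `compRel e e' = {(a,b) | ∃ c, (a,c) ∈ e ∧ (c,b) ∈ e'}`.
This is `e' ∘ e` in the paper's notation. -/
def compRel {X : Type*} (e e' : Set (X × X)) : Set (X × X) :=
  {p | ∃ c, (p.1, c) ∈ e ∧ (c, p.2) ∈ e'}

/-- A coarse structure on a set `X`. -/
def IsCoarseStructure {X : Type*} (ε : Set (Set (X × X))) : Prop :=
  Set.diagonal X ∈ ε ∧
  (∀ e ∈ ε, ∀ e' : Set (X × X), e' ⊆ e → e' ∈ ε) ∧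
  (∀ e ∈ ε, ∀ e' ∈ ε, e ∪ e' ∈ ε) ∧
  (∀ e ∈ ε, invRel e ∈ ε) ∧
  (∀ e ∈ ε, ∀ e' ∈ ε, compRel e e' ∈ ε)

/-- The coarse structure generated by a family `A` of subsets of `X × X`:
the intersection of all coarse structures containing `A`. -/
def genCoarse {X : Type*} (A : Set (Set (X × X))) : Set (Set (X × X)) :=
  ⋂₀ {ε | IsCoarseStructure ε ∧ A ⊆ ε}

/-- The `u`-neighbourhood `𝔅(B, u)` of a subset `B`. -/
def Bnh {X : Type*} (B : Set X) (u : Set (X × X)) : Set X := {x | ∃ y ∈ B, (x, y) ∈ u}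

/-- A subset `B` is bounded for the coarse structure `ε` if `B × B ∈ ε`. -/
def CBounded {X : Type*} (ε : Set (Set (X × X))) (B : Set X) : Prop := B ×ˢ B ∈ ε

/-- A map is bornologous if it sends entourages to entourages. -/
def Bornologous {X Y : Type*} (ε : Set (Set (X × X))) (ζ : Set (Set (Y × Y)))
    (f : X → Y) : Prop :=
  ∀ e ∈ ε, Prod.map f f '' e ∈ ζ

/-- A map is (coarsely) proper if preimages of bounded sets are bounded. -/
def CProper {X Y : Type*} (ε : Set (Set (X × X))) (ζ : Set (Set (Y × Y)))
    (f : X → Y) : Prop :=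
  ∀ B : Set Y, CBounded ζ B → CBounded ε (f ⁻¹' B)

/-- A coarse map is a proper bornologous map. -/
def CoarseMap {X Y : Type*} (ε : Set (Set (X × X))) (ζ : Set (Set (Y × Y)))
    (f : X → Y) : Prop :=
  Bornologous ε ζ f ∧ CProper ε ζ f

/-- Two maps `f g : S → X` are close if `{(f s, g s) | s ∈ S}` is an entourage. -/
def Close {S X : Type*} (ε : Set (Set (X × X))) (f g : S → X) : Prop :=
  Set.range (fun s => (f s, g s)) ∈ ε

/-- A coarse equivalence: a coarse map with a coarse quasi-inverse. -/
def CoarseEquiv {X Y : Type*} (ε : Set (Set (X × X))) (ζ : Set (Set (Y × Y)))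
    (f : X → Y) : Prop :=
  CoarseMap ε ζ f ∧
    ∃ g : Y → X, CoarseMap ζ ε g ∧ Close ζ (f ∘ g) id ∧ Close ε (g ∘ f) id

/-- The subspace coarse structure on `A ⊆ Y`. -/
def SubCoarse {Y : Type*} (ζ : Set (Set (Y × Y))) (A : Set Y) : Set (Set (↥A × ↥A)) :=
  {e | Prod.map (Subtype.val : A → Y) (Subtype.val : A → Y) '' e ∈ ζ}

/-- A coarse embedding: a coarse map which is a coarse equivalence onto its image with
the subspace coarse structure. -/
def CoarseEmbedding {X Y : Type*} (ε : Set (Set (X × X))) (ζ : Set (Set (Y × Y)))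
    (f : X → Y) : Prop :=
  CoarseMap ε ζ f ∧ CoarseEquiv ε (SubCoarse ζ (Set.range f)) (Set.rangeFactorization f)

/-- A coarse space is coarsely connected if every pair lies in some entourage. -/
def CoarselyConnected {X : Type*} (ε : Set (Set (X × X))) : Prop :=
  ∀ x y : X, ∃ e ∈ ε, (x, y) ∈ e

/-- `A` is quasi-dense if `𝔅(A, e) = X` for some entourage `e`. -/
def QuasiDense {X : Type*} (ε : Set (Set (X × X))) (A : Set X) : Prop :=
  ∃ e ∈ ε, Bnh A e = Set.univ

/-- A subset of a topological space is topologically bounded if its closure is compact. -/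
def TopBounded {X : Type*} [TopologicalSpace X] (B : Set X) : Prop := IsCompact (closure B)

/-- A coarse structure on a topological space is proper if it contains a neighbourhood of
the diagonal and every bounded set is topologically bounded. -/
def ProperCoarse {X : Type*} [TopologicalSpace X] (ε : Set (Set (X × X))) : Prop :=
  (∃ e ∈ ε, e ∈ nhdsSet (Set.diagonal X)) ∧ ∀ B : Set X, CBounded ε B → TopBounded B

/-! ### Artin–Wraith glueings -/

/-- An admissible map `f : Closed(X) → Closed(Y)`. -/
def Admissible {X Y : Type*} [TopologicalSpace X] [TopologicalSpace Y]
    (f : Set X → Set Y) : Prop :=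
  (∀ A : Set X, IsClosed A → IsClosed (f A)) ∧
  (∀ A B : Set X, IsClosed A → IsClosed B → f (A ∪ B) = f A ∪ f B) ∧
  f ∅ = ∅

/-- The closed sets of the Artin–Wraith glueing `X +_f Y`. -/
def AWClosed {X Y : Type*} [TopologicalSpace X] [TopologicalSpace Y]
    (f : Set X → Set Y) : Set (Set (X ⊕ Y)) :=
  {A | IsClosed (Sum.inl ⁻¹' A) ∧ IsClosed (Sum.inr ⁻¹' A) ∧
    Sum.inr '' f (Sum.inl ⁻¹' A) ⊆ A}

/-- The topology of the Artin–Wraith glueing `X +_f Y` on `X ⊕ Y`. (For admissible `f`,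
the closed sets of this topology are exactly the members of `AWClosed f`.) -/
def AWTop {X Y : Type*} [TopologicalSpace X] [TopologicalSpace Y]
    (f : Set X → Set Y) : TopologicalSpace (X ⊕ Y) :=
  TopologicalSpace.generateFrom (compl '' AWClosed f)

/-- `X +_f W` is a (Hausdorff) compactification of `X`: a compact Hausdorff Artin–Wraith
glueing in which `X` is dense. -/
def IsCompactification {X W : Type*} [TopologicalSpace X] [TopologicalSpace W]
    (f : Set X → Set W) : Prop :=
  Admissible f ∧
  @CompactSpace (X ⊕ W) (AWTop f) ∧
  @T2Space (X ⊕ W) (AWTop f) ∧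
  @Dense (X ⊕ W) (AWTop f) (Set.range Sum.inl)

/-- A relation `e ⊆ X × X` is proper if `𝔅(B,e)` and `𝔅(B,e⁻¹)` are topologically
bounded for every topologically bounded `B`. -/
def ProperRel {X : Type*} [TopologicalSpace X] (e : Set (X × X)) : Prop :=
  ∀ B : Set X, TopBounded B → TopBounded (Bnh B e) ∧ TopBounded (Bnh B (invRel e))

/-- `e` is a perspective subset of `X × X` with respect to the compactification `X +_f W`. -/
def PerspRel {X W : Type*} [TopologicalSpace X] [TopologicalSpace W]
    (f : Set X → Set W) (e : Set (X × X)) : Prop :=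
  ProperRel e ∧
  ∀ y : W, ∀ V : Set (X ⊕ W), IsOpen[AWTop f] V → Sum.inr y ∈ V →
    ∃ U : Set (X ⊕ W), IsOpen[AWTop f] U ∧ Sum.inr y ∈ U ∧ U ⊆ V ∧
      ∀ p ∈ e, Sum.inl p.1 ∈ U → Sum.inl p.2 ∈ V

/-- A perspective compactification of the coarse space `(X, ε)`. -/
def PerspCompactification {X W : Type*} [TopologicalSpace X] [TopologicalSpace W]
    (ε : Set (Set (X × X))) (f : Set X → Set W) : Prop :=
  IsCompactification f ∧ ∀ e ∈ ε, PerspRel f e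

/-- The pullback of `f : Closed(X) → Closed(W)` with respect to `π : Y → X` and
`ϖ : Z → W`. -/
def pullbackAW {X Y Z W : Type*} [TopologicalSpace X] [TopologicalSpace Z]
    (f : Set X → Set W) (π : Y → X) (ϖ : Z → W) (A : Set Y) : Set Z :=
  closure (ϖ ⁻¹' (f (closure (π '' A))))

/-! ### Group actions -/

/-- `φ : G → X → X` is an action by homeomorphisms. -/
def IsActionByHomeos {G X : Type*} [Group G] [TopologicalSpace X]
    (φ : G → X → X) : Prop :=
  (∀ g : G, Continuous (φ g)) ∧ (∀ x : X, φ 1 x = x) ∧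
    ∀ g h : G, ∀ x : X, φ (g * h) x = φ g (φ h x)

/-- A properly discontinuous action. -/
def ProperlyDisc {G X : Type*} [TopologicalSpace X] (φ : G → X → X) : Prop :=
  ∀ K : Set X, IsCompact K → {g : G | (φ g '' K ∩ K).Nonempty}.Finite

/-- A cocompact action. -/
def CocompactAct {G X : Type*} [TopologicalSpace X] (φ : G → X → X) : Prop :=
  ∃ K : Set X, IsCompact K ∧ (⋃ g : G, φ g '' K) = Set.univ

/-- The saturation `Sat(A) = {(φ(g,x), φ(g,x')) : g ∈ G, x, x' ∈ A}`. -/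
def Sat {G X : Type*} (φ : G → X → X) (A : Set X) : Set (X × X) :=
  {p | ∃ g : G, ∃ x ∈ A, ∃ x' ∈ A, p = (φ g x, φ g x')}

/-- The coarse structure `ε_φ` on `X` generated by the saturations of topologically
bounded sets. -/
def coarseOfAction {G X : Type*} [TopologicalSpace X] (φ : G → X → X) :
    Set (Set (X × X)) :=
  genCoarse {e | ∃ A : Set X, TopBounded A ∧ e = Sat φ A}

/-- The saturation for the left multiplication action of a group on itself. -/
def SatMul {G : Type*} [Group G] (U : Set G) : Set (G × G) :=
  {p | ∃ g : G, ∃ u ∈ U, ∃ u' ∈ U, p = (g * u, g * u')}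

/-- The coarse structure `ε_G` on the group `G`, generated by the saturations of
finite subsets under the left multiplication action. -/
def coarseGroup (G : Type*) [Group G] : Set (Set (G × G)) :=
  genCoarse {e | ∃ U : Set G, U.Finite ∧ e = SatMul U}

/-- The compactification `X +_f W` is group-theoretically perspective with respect to the
action `φ`. -/
def GTPerspective {G X W : Type*} [TopologicalSpace X] [TopologicalSpace W]
    (φ : G → X → X) (f : Set X → Set W) : Prop :=
  ∀ K : Set X, IsCompact K → ∀ y : W, ∀ U : Set (X ⊕ W),
    IsOpen[AWTop f] U → Sum.inr y ∈ U →
      ∃ V : Set (X ⊕ W), IsOpen[AWTop f] V ∧ Sum.inr y ∈ V ∧ V ⊆ U ∧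
        ∀ g : G, (∃ x ∈ K, Sum.inl (φ g x) ∈ V) → ∀ x ∈ K, Sum.inl (φ g x) ∈ U

/-! ### Rays and accessibility -/

/-- A family `Ψ` of rays in `X` based at `p`: each member is a pair `(A, γ)` of a closed
unbounded subset `A ⊆ [0,∞)` containing `0` and a map `γ : ℝ → X` (regarded on `A`) which
is injective on `A`, proper, and satisfies `γ 0 = p`. -/
def GoodRayFamily {X : Type*} [TopologicalSpace X] (p : X)
    (Ψ : Set (Set ℝ × (ℝ → X))) : Prop :=
  ∀ r ∈ Ψ, r.1 ⊆ Set.Ici (0 : ℝ) ∧ IsClosed r.1 ∧ ¬Bornology.IsBounded r.1 ∧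
    (0 : ℝ) ∈ r.1 ∧ r.2 0 = p ∧ Set.InjOn r.2 r.1 ∧
    ∀ B : Set X, TopBounded B → Bornology.IsBounded (r.1 ∩ r.2 ⁻¹' B)

/-- The compactification `X +_f W` is `Ψ`-accessible. -/
def AccessibleComp {X W : Type*} [TopologicalSpace X] [TopologicalSpace W]
    (f : Set X → Set W) (Ψ : Set (Set ℝ × (ℝ → X))) : Prop :=
  (∀ w : W, ∃ r ∈ Ψ, f (closure (r.2 '' r.1)) = {w}) ∧
  ∀ r ∈ Ψ, ∃ w : W, f (closure (r.2 '' r.1)) = {w}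

/-!
Since `Y +_g Z'` is compact and `X +_f Z` is Hausdorff, `π+ψ` is a closed map, so it carries the
closure `A ∪ g(A)` of a closed set `A ⊆ Y` onto the closure `cl π(A) ∪ f(cl π(A))` of `π(A)`.
Comparing the boundary parts gives `ψ(g(A)) = f(cl π(A)) = f*(A)`, and this identity says exactly
that `id+ψ`, and for a homeomorphism `ψ` also `id+ψ⁻¹`, pulls closed sets of the target glueing
back to closed sets.
-/

section ArtinWraith

variable {X Y Z W : Type*} [TopologicalSpace X] [TopologicalSpace Y] [TopologicalSpace Z]
  [TopologicalSpace W] {f : Set X → Set Z}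

theorem Admissible.mono (hf : Admissible f) {A B : Set X} (hA : IsClosed A) (hB : IsClosed B)
    (hAB : A ⊆ B) : f A ⊆ f B := by
  rw [← union_eq_self_of_subset_left hAB, hf.2.1 A B hA hB]
  exact subset_union_left

theorem Admissible.empty_mem_awClosed (hf : Admissible f) : ∅ ∈ AWClosed f :=
  ⟨isClosed_empty, isClosed_empty, by simp [hf.2.2]⟩

theorem Admissible.union_mem_awClosed (hf : Admissible f) {A B : Set (X ⊕ Z)}
    (hA : A ∈ AWClosed f) (hB : B ∈ AWClosed f) : A ∪ B ∈ AWClosed f := by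
  refine ⟨hA.1.union hB.1, hA.2.1.union hB.2.1, ?_⟩
  rw [preimage_union, hf.2.1 _ _ hA.1 hB.1, image_union]
  exact union_subset_union hA.2.2 hB.2.2

theorem Admissible.sInter_mem_awClosed (hf : Admissible f) {S : Set (Set (X ⊕ Z))}
    (hS : S ⊆ AWClosed f) : ⋂₀ S ∈ AWClosed f := by
  have hinl : IsClosed (Sum.inl ⁻¹' ⋂₀ S : Set X) := by
    rw [preimage_sInter]; exact isClosed_biInter fun A hA => (hS hA).1
  refine ⟨hinl, by rw [preimage_sInter]; exact isClosed_biInter fun A hA => (hS hA).2.1, ?_⟩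
  rintro _ ⟨z, hz, rfl⟩
  refine mem_sInter.2 fun A hA => (hS hA).2.2 ⟨z, ?_, rfl⟩
  exact hf.mono hinl (hS hA).1 (preimage_mono (sInter_subset_of_mem hA)) hz

theorem Admissible.isClosed_awTop_iff (hf : Admissible f) {A : Set (X ⊕ Z)} :
    IsClosed[AWTop f] A ↔ A ∈ AWClosed f := by
  let t : TopologicalSpace (X ⊕ Z) := .ofClosed (AWClosed f) hf.empty_mem_awClosed
    (fun _ => hf.sInter_mem_awClosed) (fun _ hA _ hB => hf.union_mem_awClosed hA hB)
  have ht : AWTop f = t := by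
    rw [AWTop, compl_image]
    exact TopologicalSpace.generateFrom_setOfPred_isOpen t
  rw [ht, ← @isOpen_compl_iff]
  show Aᶜᶜ ∈ AWClosed f ↔ _
  rw [compl_compl]

theorem isClosed_awTop_of_mem {A : Set (X ⊕ Z)} (hA : A ∈ AWClosed f) : IsClosed[AWTop f] A :=
  @isOpen_compl_iff _ _ (AWTop f) |>.1 <| .basic _ ⟨A, hA, rfl⟩

theorem Admissible.closure_inl_image (hf : Admissible f) (S : Set X) :
    closure[AWTop f] (Sum.inl '' S) = Sum.inl '' closure S ∪ Sum.inr '' f (closure S) := by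
  let := AWTop f
  have hC : Sum.inl '' closure S ∪ Sum.inr '' f (closure S) ∈ AWClosed f := by
    refine ⟨?_, ?_, ?_⟩ <;>
      simp only [preimage_union, preimage_inl_image_inr, preimage_inr_image_inl,
        Sum.inl_injective.preimage_image, Sum.inr_injective.preimage_image, union_empty,
        empty_union, isClosed_closure, hf.1 _ isClosed_closure, subset_union_right]
  have hD : closure (Sum.inl '' S) ∈ AWClosed f := hf.isClosed_awTop_iff.1 isClosed_closure
  have hS : closure S ⊆ Sum.inl ⁻¹' closure (Sum.inl '' S) :=
    closure_minimal (fun x hx => subset_closure (mem_image_of_mem _ hx)) hD.1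
  refine (closure_minimal ?_ (isClosed_awTop_of_mem hC)).antisymm ?_
  · exact subset_union_left.trans' (image_mono subset_closure)
  · rintro _ (⟨x, hx, rfl⟩ | ⟨z, hz, rfl⟩)
    · exact hS hx
    · exact hD.2.2 ⟨z, hf.mono isClosed_closure hD.1 hS hz, rfl⟩

theorem continuous_inr_awTop : Continuous[_, AWTop f] (Sum.inr : Z → X ⊕ Z) :=
  continuous_generateFrom_iff.2 fun _ ⟨_, hA, hAs⟩ => hAs ▸ hA.2.1.isOpen_compl

theorem isClosedEmbedding_inr_awTop (hf : f ∅ = ∅) :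
    @IsClosedEmbedding Z (X ⊕ Z) _ (AWTop f) Sum.inr := by
  let := AWTop f
  refine .of_continuous_injective_isClosedMap continuous_inr_awTop Sum.inr_injective
    fun C hC => isClosed_awTop_of_mem ⟨?_, ?_, ?_⟩
  · simp
  · simpa [Sum.inr_injective.preimage_image] using hC
  · simp [hf]

variable {g : Set Y → Set W} {φ : Y → X} {ψ : W → Z}

theorem continuous_of_continuous_sumMap_awTop (hf : f ∅ = ∅)
    (h : Continuous[AWTop g, AWTop f] (Sum.map φ ψ)) : Continuous ψ := by
  let := AWTop g; let := AWTop f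
  exact (isClosedEmbedding_inr_awTop hf).continuous_iff.2 (h.comp continuous_inr_awTop)

theorem continuous_sumMap_awTop (hφ : Continuous φ) (hψ : Continuous ψ)
    (h : ∀ A, IsClosed A → ψ '' g (φ ⁻¹' A) ⊆ f A) :
    Continuous[AWTop g, AWTop f] (Sum.map φ ψ) := by
  refine continuous_generateFrom_iff.2 ?_
  rintro _ ⟨A, hA, rfl⟩
  refine @IsClosed.isOpen_compl _ (AWTop g) _
    (isClosed_awTop_of_mem ⟨hA.1.preimage hφ, hA.2.1.preimage hψ, ?_⟩)
  rintro _ ⟨w, hw, rfl⟩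
  exact hA.2.2 ⟨ψ w, h _ hA.1 ⟨w, hw, rfl⟩, rfl⟩

theorem image_apply_eq_apply_closure_image (hf : Admissible f) (hg : Admissible g)
    (hfT2 : @T2Space (X ⊕ Z) (AWTop f)) (hgc : @CompactSpace (Y ⊕ W) (AWTop g))
    (h : Continuous[AWTop g, AWTop f] (Sum.map φ ψ)) {A : Set Y} (hA : IsClosed A) :
    ψ '' g A = f (closure (φ '' A)) := by
  let := AWTop g; let := AWTop f
  have himg := h.isClosedMap.closure_image_eq_of_continuous h (Sum.inl '' A)
  have hinl : Sum.map φ ψ '' (Sum.inl '' A) = Sum.inl '' (φ '' A) := by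
    simp only [image_image, Sum.map_inl]
  rw [hinl, hf.closure_inl_image, hg.closure_inl_image, hA.closure_eq] at himg
  have hmap : Sum.map φ ψ '' (Sum.inl '' A ∪ Sum.inr '' g A) =
      Sum.inl '' (φ '' A) ∪ Sum.inr '' (ψ '' g A) := by
    simp only [image_union, image_image, Sum.map_inl, Sum.map_inr]
  rw [hmap] at himg
  simpa only [preimage_union, preimage_inr_image_inl, Sum.inr_injective.preimage_image,
    empty_union] using (congrArg (Sum.inr ⁻¹' ·) himg).symm

end ArtinWraith

theorem pullbackAW_id {X Y Z : Type*} [TopologicalSpace X] [TopologicalSpace Z]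
    {f : Set X → Set Z} (hf : Admissible f) (π : Y → X) (A : Set Y) :
    pullbackAW f π id A = f (closure (π '' A)) := by
  rw [pullbackAW, preimage_id, (hf.1 _ isClosed_closure).closure_eq]

theorem stmt15_general {X Y Z Z' : Type*} [TopologicalSpace X] [TopologicalSpace Y]
    [TopologicalSpace Z] [TopologicalSpace Z']
    (ε : Set (Set (X × X))) (η : Set (Set (Y × Y)))
    (π : Y → X)
    (f : Set X → Set Z) (g : Set Y → Set Z')
    (hf : PerspCompactification ε f) (hg : PerspCompactification η g)
    (ψ : Z' → Z)
    (hext : Continuous[AWTop g, AWTop f] (Sum.map π ψ)) :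
    Continuous[AWTop g, AWTop (pullbackAW f π (id : Z → Z))]
      (Sum.map (id : Y → Y) ψ) ∧
    (IsHomeomorph ψ →
      @IsHomeomorph (Y ⊕ Z') (Y ⊕ Z) (AWTop g) (AWTop (pullbackAW f π (id : Z → Z)))
        (Sum.map (id : Y → Y) ψ)) ∧
    (∀ g' : Set Y → Set Z, PerspCompactification η g' →
      Continuous[AWTop g', AWTop f] (Sum.map π (id : Z → Z)) →
      ∀ A : Set Y, IsClosed A → pullbackAW f π (id : Z → Z) A = g' A) := by
  obtain ⟨⟨hfa, -, hfT2, -⟩, -⟩ := hf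
  obtain ⟨⟨hga, hgc, -, -⟩, -⟩ := hg
  have hψ : Continuous ψ := continuous_of_continuous_sumMap_awTop hfa.2.2 hext
  have hpull : ∀ A, IsClosed A → pullbackAW f π id A = ψ '' g A := fun A hA => by
    rw [pullbackAW_id hfa, image_apply_eq_apply_closure_image hfa hga hfT2 hgc hext hA]
  have hcont := continuous_sumMap_awTop continuous_id hψ fun A hA => (hpull A hA).ge
  refine ⟨hcont, fun hψh => ?_, fun g' hg' hext' A hA => ?_⟩
  · obtain ⟨e, rfl⟩ := isHomeomorph_iff_exists_homeomorph.1 hψh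
    have hinv := continuous_sumMap_awTop (g := pullbackAW f π id) (f := g) continuous_id
      e.symm.continuous fun A hA => by
        rw [preimage_id, hpull A hA, image_image]; simp
    let := AWTop g; let := AWTop (pullbackAW f π (id : Z → Z))
    exact isHomeomorph_iff_exists_inverse.2 ⟨hcont, _, by rintro (y | z) <;> simp,
      by rintro (y | z) <;> simp, hinv⟩
  · rw [pullbackAW_id hfa, ← image_apply_eq_apply_closure_image hfa hg'.1.1 hfT2 hg'.1.2.1
      hext' hA, image_id]

/-- if the continuous coarse equivalence `π` extends to a continuous map
`π+ψ : Y +_g Z' → X +_f Z`, then `id+ψ : Y +_g Z' → Y +_{f*} Z` is continuous;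
if `ψ` is a homeomorphism then so is `id+ψ`; and in the case `Z' = Z`, `ψ = id`,
the pullback `f*` agrees with `g` on closed sets. -/
theorem stmt15 {X Y Z Z' : Type*} [TopologicalSpace X] [T2Space X] [LocallyCompactSpace X]
    [ParacompactSpace X] [TopologicalSpace Y] [T2Space Y] [LocallyCompactSpace Y]
    [ParacompactSpace Y] [TopologicalSpace Z] [TopologicalSpace Z']
    (ε : Set (Set (X × X))) (η : Set (Set (Y × Y)))
    (hε : IsCoarseStructure ε) (hεconn : CoarselyConnected ε) (hεprop : ProperCoarse ε)
    (hη : IsCoarseStructure η) (hηconn : CoarselyConnected η) (hηprop : ProperCoarse η)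
    (π : Y → X) (hπc : Continuous π) (hπ : CoarseEquiv η ε π)
    (f : Set X → Set Z) (g : Set Y → Set Z')
    (hf : PerspCompactification ε f) (hg : PerspCompactification η g)
    (ψ : Z' → Z)
    (hext : Continuous[AWTop g, AWTop f] (Sum.map π ψ)) :
    Continuous[AWTop g, AWTop (pullbackAW f π (id : Z → Z))]
      (Sum.map (id : Y → Y) ψ) ∧
    (IsHomeomorph ψ →
      @IsHomeomorph (Y ⊕ Z') (Y ⊕ Z) (AWTop g) (AWTop (pullbackAW f π (id : Z → Z)))
        (Sum.map (id : Y → Y) ψ)) ∧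
    (∀ g' : Set Y → Set Z, PerspCompactification η g' →
      Continuous[AWTop g', AWTop f] (Sum.map π (id : Z → Z)) →
      ∀ A : Set Y, IsClosed A → pullbackAW f π (id : Z → Z) A = g' A) :=
  stmt15_general ε η π f g hf hg ψ hext

end Paper
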